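/- (Closed form of the edge update.) The pair (a*, b*) given by a* = α·x + (1−α)·z and b* = α·z + (1−α)·x is the unique minimizer of G over ℝ^m × ℝ^m. -/

import Mathlib

open Finset Filter

noncomputable section

namespace Paper

/-- The edge-update objective `G(a,b)`. -/
def Gedge (m : ℕ) (lam rho : ℝ) (x z a b : Fin m → ℝ) : ℝ :=
  lam * ∑ t, (a t - b t) ^ 2 + rho / 2 * ((∑ t, (x t - a t) ^ 2) + ∑ t, (z t - b t) ^ 2)

/-! `G` is a quadratic whose Hessian part is `Gedge m lam rho 0 0`, so at a critical point `(A, B)`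
it splits as `G(a, b) = G(A, B) + Gedge m lam rho 0 0 (a - A) (b - B)`. The closed form is the
critical point, and the Hessian part is positive definite because `rho > 0`. -/

lemma Gedge_eq_sum (m : ℕ) (lam rho : ℝ) (x z a b : Fin m → ℝ) :
    Gedge m lam rho x z a b =
      ∑ t, (lam * (a t - b t) ^ 2 + rho / 2 * ((x t - a t) ^ 2 + (z t - b t) ^ 2)) := by
  simp only [Gedge, mul_sum, ← sum_add_distrib, mul_add]

lemma Gedge_eq_add_of_stationary (m : ℕ) (lam rho : ℝ) (x z A B : Fin m → ℝ)
    (hA : ∀ t, 2 * lam * (A t - B t) = rho * (x t - A t))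
    (hB : ∀ t, 2 * lam * (B t - A t) = rho * (z t - B t)) (a b : Fin m → ℝ) :
    Gedge m lam rho x z a b = Gedge m lam rho x z A B + Gedge m lam rho 0 0 (a - A) (b - B) := by
  rw [Gedge_eq_sum, Gedge_eq_sum, Gedge_eq_sum, ← sum_add_distrib]
  refine sum_congr rfl fun t _ => ?_
  simp only [Pi.sub_apply, Pi.zero_apply]
  linear_combination (a t - A t) * hA t + (b t - B t) * hB t

lemma Gedge_zero_zero_pos (m : ℕ) {lam rho : ℝ} (hlam : 0 ≤ lam) (hrho : 0 < rho)
    {u v : Fin m → ℝ} (huv : (u, v) ≠ 0) : 0 < Gedge m lam rho 0 0 u v := by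
  obtain ⟨t, ht⟩ : ∃ t, u t ≠ 0 ∨ v t ≠ 0 := by
    by_contra! h
    exact huv (Prod.ext (funext fun t => (h t).1) (funext fun t => (h t).2))
  have hsq : 0 < ∑ s, u s ^ 2 + ∑ s, v s ^ 2 :=
    calc 0 < u t ^ 2 + v t ^ 2 := by rcases ht with h | h <;> positivity
      _ ≤ ∑ s, u s ^ 2 + ∑ s, v s ^ 2 := by
        gcongr <;> exact single_le_sum (fun s _ => sq_nonneg _) (mem_univ t)
  simp only [Gedge, Pi.zero_apply, zero_sub, neg_sq]
  positivity

theorem stmt17_general (m : ℕ) (lam rho : ℝ) (hlam : 0 < lam) (hrho : 0 < rho)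
    (x z : Fin m → ℝ) :
    let α : ℝ := (2 * lam + rho) / (4 * lam + rho)
    let astar : Fin m → ℝ := fun t => α * x t + (1 - α) * z t
    let bstar : Fin m → ℝ := fun t => α * z t + (1 - α) * x t
    ∀ a b : Fin m → ℝ, (a, b) ≠ (astar, bstar) →
      Gedge m lam rho x z astar bstar < Gedge m lam rho x z a b := by
  intro α astar bstar a b hne
  have hα : α * (4 * lam + rho) = 2 * lam + rho := div_mul_cancel₀ _ (by positivity)
  have hA : ∀ t, 2 * lam * (astar t - bstar t) = rho * (x t - astar t) := fun t => by
    linear_combination (x t - z t) * hα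
  have hB : ∀ t, 2 * lam * (bstar t - astar t) = rho * (z t - bstar t) := fun t => by
    linear_combination (z t - x t) * hα
  rw [Gedge_eq_add_of_stationary m lam rho x z astar bstar hA hB a b]
  refine lt_add_of_pos_right _ (Gedge_zero_zero_pos m hlam.le hrho ?_)
  rwa [← Prod.mk_sub_mk, sub_ne_zero]

theorem stmt17 (m : ℕ) (hm : 1 ≤ m) (lam rho : ℝ) (hlam : 0 < lam) (hrho : 0 < rho)
    (x z : Fin m → ℝ) :
    let α : ℝ := (2 * lam + rho) / (4 * lam + rho)
    let astar : Fin m → ℝ := fun t => α * x t + (1 - α) * z t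
    let bstar : Fin m → ℝ := fun t => α * z t + (1 - α) * x t
    ∀ a b : Fin m → ℝ, (a, b) ≠ (astar, bstar) →
      Gedge m lam rho x z astar bstar < Gedge m lam rho x z a b :=
  stmt17_general m lam rho hlam hrho x z

end Paper
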